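/- arXiv:2309.16354 — 3 statements merged into one kernel-verified Lean document; each statement's English description precedes it below -/
import Mathlib

section
/- Under the assumptions E[q qᵀ] = σ² I with σ > 0, q independent of k, and φ constrained to take values in the finite codebook {C s : s ∈ Fin S}, the nearest-codeword quantizer φ = VQ(·; C) minimizes E[(qᵀk − qᵀφ(k))²] over all such measurable φ. -/
/-!
For `X` independent of `q`, Fubini and isotropy give `E[(qᵀX)²] = σ² E[‖X‖²]`. Applied to
`X = k - φ(k)`, the dot-product error of any quantizer is `σ²` times its mean squared
quantization error, which the nearest-codeword map minimizes pointwise.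
-/

open MeasureTheory

namespace ProbabilityTheory

variable {Ω β β' E : Type*} [MeasurableSpace Ω] [MeasurableSpace β] [MeasurableSpace β']
  [NormedAddCommGroup E] [NormedSpace ℝ E] {μ : Measure Ω} [IsFiniteMeasure μ]

theorem IndepFun.integral_comp_eq_integral_integral {X : Ω → β} {Y : Ω → β'}
    (hXY : IndepFun X Y μ) (hX : Measurable X) (hY : Measurable Y) {f : β → β' → E}
    (hf : StronglyMeasurable (Function.uncurry f))
    (hint : Integrable (fun ω => f (X ω) (Y ω)) μ) :
    ∫ ω, f (X ω) (Y ω) ∂μ = ∫ y, ∫ x, f x y ∂μ.map X ∂μ.map Y := by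
  have hmap := hXY.map_prod_eq_prod_map_map hX.aemeasurable hY.aemeasurable
  have hXY' : AEMeasurable (fun ω => (X ω, Y ω)) μ := (hX.prodMk hY).aemeasurable
  have hint' : Integrable (Function.uncurry f) ((μ.map X).prod (μ.map Y)) := by
    rwa [← hmap, integrable_map_measure hf.aestronglyMeasurable hXY']
  calc ∫ ω, f (X ω) (Y ω) ∂μ
      = ∫ p, Function.uncurry f p ∂μ.map (fun ω => (X ω, Y ω)) :=
        (integral_map hXY' hf.aestronglyMeasurable).symm
    _ = ∫ p, Function.uncurry f p ∂(μ.map X).prod (μ.map Y) := by rw [hmap]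
    _ = ∫ y, ∫ x, f x y ∂μ.map X ∂μ.map Y := integral_prod_symm _ hint'

theorem IndepFun.integral_sq_sum_mul_eq {ι : Type*} [Fintype ι] {q X : Ω → ι → ℝ}
    (hqX : IndepFun q X μ) (hq : Measurable q) (hX : Measurable X) (σ : ℝ)
    (hiso : ∀ v : ι → ℝ, ∫ ω, (∑ i, q ω i * v i) ^ 2 ∂μ = σ ^ 2 * ∑ i, v i ^ 2)
    (hint : Integrable (fun ω => (∑ i, q ω i * X ω i) ^ 2) μ) :
    ∫ ω, (∑ i, q ω i * X ω i) ^ 2 ∂μ = σ ^ 2 * ∫ ω, ∑ i, X ω i ^ 2 ∂μ := by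
  have hf : Measurable fun p : (ι → ℝ) × (ι → ℝ) => (∑ i, p.1 i * p.2 i) ^ 2 := by fun_prop
  rw [hqX.integral_comp_eq_integral_integral hq hX (f := fun x y => (∑ i, x i * y i) ^ 2)
    hf.stronglyMeasurable hint]
  have hinner (y : ι → ℝ) : ∫ x, (∑ i, x i * y i) ^ 2 ∂μ.map q = σ ^ 2 * ∑ i, y i ^ 2 := by
    rw [integral_map hq.aemeasurable (Measurable.aestronglyMeasurable (by fun_prop)), hiso]
  simp_rw [hinner]
  rw [integral_const_mul,
    integral_map hX.aemeasurable (Measurable.aestronglyMeasurable (by fun_prop))]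

end ProbabilityTheory

theorem vq_minimizes_expected_dot_error_general {Ω : Type*} [MeasurableSpace Ω] (μ : Measure Ω)
    [IsProbabilityMeasure μ] {S D : ℕ} (C : Fin S → Fin D → ℝ)
    (σ : ℝ)
    (q k : Ω → Fin D → ℝ) (hq : Measurable q) (hk : Measurable k)
    (hindep : ProbabilityTheory.IndepFun q k μ)
    (hiso : ∀ u v : Fin D → ℝ,
      ∫ ω, (∑ i, q ω i * u i) * (∑ i, q ω i * v i) ∂μ = σ ^ 2 * ∑ i, u i * v i)
    (vq : (Fin D → ℝ) → Fin D → ℝ) (hvqmeas : Measurable vq)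
    (hvq : ∀ x : Fin D → ℝ, ∃ z : Fin S, vq x = C z ∧
      ∀ s : Fin S, ∑ i, (x i - C z i) ^ 2 ≤ ∑ i, (x i - C s i) ^ 2)
    (φ : (Fin D → ℝ) → Fin D → ℝ) (hφmeas : Measurable φ)
    (hφrange : ∀ x : Fin D → ℝ, ∃ s : Fin S, φ x = C s)
    (hint1 : Integrable
      (fun ω => ((∑ i, q ω i * k ω i) - ∑ i, q ω i * vq (k ω) i) ^ 2) μ)
    (hint2 : Integrable
      (fun ω => ((∑ i, q ω i * k ω i) - ∑ i, q ω i * φ (k ω) i) ^ 2) μ)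
    (hint4 : Integrable (fun ω => ∑ i, (k ω i - φ (k ω) i) ^ 2) μ) :
    ∫ ω, ((∑ i, q ω i * k ω i) - ∑ i, q ω i * vq (k ω) i) ^ 2 ∂μ
      ≤ ∫ ω, ((∑ i, q ω i * k ω i) - ∑ i, q ω i * φ (k ω) i) ^ 2 ∂μ := by
  have hquad (v : Fin D → ℝ) : ∫ ω, (∑ i, q ω i * v i) ^ 2 ∂μ = σ ^ 2 * ∑ i, v i ^ 2 := by
    simpa only [← sq] using hiso v v
  have herror (ψ : (Fin D → ℝ) → Fin D → ℝ) (hψ : Measurable ψ)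
      (hint : Integrable (fun ω => ((∑ i, q ω i * k ω i) - ∑ i, q ω i * ψ (k ω) i) ^ 2) μ) :
      ∫ ω, ((∑ i, q ω i * k ω i) - ∑ i, q ω i * ψ (k ω) i) ^ 2 ∂μ
        = σ ^ 2 * ∫ ω, ∑ i, (k ω i - ψ (k ω) i) ^ 2 ∂μ := by
    simp_rw [← Finset.sum_sub_distrib, ← mul_sub] at hint ⊢
    exact (hindep.comp measurable_id (measurable_id.sub hψ)).integral_sq_sum_mul_eq hq
      (hk.sub (hψ.comp hk)) σ hquad hint
  rw [herror vq hvqmeas hint1, herror φ hφmeas hint2]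
  refine mul_le_mul_of_nonneg_left (integral_mono_of_nonneg
    (ae_of_all _ fun ω => by positivity) hint4 (ae_of_all _ fun ω => ?_)) (sq_nonneg σ)
  obtain ⟨z, hvq_eq, hz_nearest⟩ := hvq (k ω)
  obtain ⟨s, hφ_eq⟩ := hφrange (k ω)
  simpa only [hvq_eq, hφ_eq] using hz_nearest s

/-- under isotropy `E[q qᵀ] = σ² I`, independence of `q` and `k`, and the
constraint that `φ` takes values in the codebook `{C s}`, the nearest-codeword
quantizer `vq` minimizes `E[(qᵀk − qᵀφ(k))²]` over all such measurable `φ`. -/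
theorem vq_minimizes_expected_dot_error {Ω : Type*} [MeasurableSpace Ω] (μ : Measure Ω)
    [IsProbabilityMeasure μ] {S D : ℕ} (hS : 1 ≤ S) (C : Fin S → Fin D → ℝ)
    (σ : ℝ) (hσ : 0 < σ)
    (q k : Ω → Fin D → ℝ) (hq : Measurable q) (hk : Measurable k)
    (hindep : ProbabilityTheory.IndepFun q k μ)
    (hiso : ∀ u v : Fin D → ℝ,
      ∫ ω, (∑ i, q ω i * u i) * (∑ i, q ω i * v i) ∂μ = σ ^ 2 * ∑ i, u i * v i)
    (vq : (Fin D → ℝ) → Fin D → ℝ) (hvqmeas : Measurable vq)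
    (hvq : ∀ x : Fin D → ℝ, ∃ z : Fin S, vq x = C z ∧
      ∀ s : Fin S, ∑ i, (x i - C z i) ^ 2 ≤ ∑ i, (x i - C s i) ^ 2)
    (φ : (Fin D → ℝ) → Fin D → ℝ) (hφmeas : Measurable φ)
    (hφrange : ∀ x : Fin D → ℝ, ∃ s : Fin S, φ x = C s)
    (hint1 : Integrable
      (fun ω => ((∑ i, q ω i * k ω i) - ∑ i, q ω i * vq (k ω) i) ^ 2) μ)
    (hint2 : Integrable
      (fun ω => ((∑ i, q ω i * k ω i) - ∑ i, q ω i * φ (k ω) i) ^ 2) μ)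
    (hint3 : Integrable (fun ω => ∑ i, (k ω i - vq (k ω) i) ^ 2) μ)
    (hint4 : Integrable (fun ω => ∑ i, (k ω i - φ (k ω) i) ^ 2) μ) :
    ∫ ω, ((∑ i, q ω i * k ω i) - ∑ i, q ω i * vq (k ω) i) ^ 2 ∂μ
      ≤ ∫ ω, ((∑ i, q ω i * k ω i) - ∑ i, q ω i * φ (k ω) i) ^ 2 ∂μ :=
  vq_minimizes_expected_dot_error_general μ C σ q k hq hk hindep hiso vq hvqmeas hvq φ hφmeas
    hφrange hint1 hint2 hint4
end

section
/- Let Q ∈ ℝ^{T×D}, C ∈ ℝ^{S×D}, z : Fin T → Fin S, K̂ⱼ = C_{z(j)}, and Δ_{s,t} = δ_{s, z(t)}. Let 1 ∈ ℝ^T be the all-ones vector. Then the row-wise softmax of Q K̂ᵀ satisfies Softmax(Q K̂ᵀ) = Diag(exp(Q Cᵀ) Δ 1)^{-1} · exp(Q Cᵀ) · Δ, where exp is applied entrywise and Diag(v)^{-1} is the diagonal matrix with entries 1/vᵢ. -/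
/-! Right multiplication by `Δ` selects the columns `z t`, so `exp(Q Cᵀ) Δ = exp(Q K̂ᵀ)`; and
left multiplication by `Diag(E 1)⁻¹` divides each row of `E` by its row sum, which is softmax
when `E = exp(Q K̂ᵀ)`. -/

open Matrix

section

variable {m n o R : Type*}

theorem Matrix.mul_apply_of_eq_ite [Fintype n] [DecidableEq n] [NonAssocSemiring R]
    (A : Matrix m n R) {Δ : Matrix n o R} {z : o → n}
    (hΔ : ∀ s t, Δ s t = if s = z t then 1 else 0) (i : m) (j : o) :
    (A * Δ) i j = A i (z j) := by
  simp [mul_apply, hΔ]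

theorem Matrix.mul_transpose_apply_of_row_eq [Fintype n] [Mul R] [AddCommMonoid R]
    (Q : Matrix m n R) {C : Matrix o n R} {K : Matrix m n R} {z : m → o}
    (hK : ∀ j, K j = C (z j)) (i j : m) :
    (Q * Kᵀ) i j = (Q * Cᵀ) i (z j) := by
  simp only [mul_apply, transpose_apply, hK]

theorem Matrix.diagonal_inv_mulVec_one_mul_apply [Fintype m] [Fintype n] [DecidableEq m]
    [Field R] (E : Matrix m n R) (i : m) (j : n) :
    (diagonal (fun i => ((E *ᵥ fun _ => (1 : R)) i)⁻¹) * E) i j = E i j / ∑ j', E i j' := by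
  simp [mulVec, dotProduct, inv_mul_eq_div]

end

theorem vq_softmax_factorization_general {T S D : ℕ}
    (Q : Matrix (Fin T) (Fin D) ℝ) (C : Matrix (Fin S) (Fin D) ℝ)
    (z : Fin T → Fin S)
    (Khat : Matrix (Fin T) (Fin D) ℝ) (hK : ∀ j : Fin T, Khat j = C (z j))
    (Δ : Matrix (Fin S) (Fin T) ℝ)
    (hΔ : ∀ (s : Fin S) (t : Fin T), Δ s t = if s = z t then 1 else 0)
    (W : Matrix (Fin T) (Fin T) ℝ)
    (hW : ∀ i j : Fin T, W i j =
      Real.exp ((Q * Khatᵀ) i j) / ∑ j' : Fin T, Real.exp ((Q * Khatᵀ) i j')) :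
    W = Matrix.diagonal
          (fun i => ((((Q * Cᵀ).map Real.exp) * Δ).mulVec (fun _ => (1 : ℝ)) i)⁻¹)
        * (((Q * Cᵀ).map Real.exp) * Δ) := by
  have hE : (Q * Cᵀ).map Real.exp * Δ = (Q * Khatᵀ).map Real.exp := by
    ext i j
    rw [mul_apply_of_eq_ite _ hΔ, map_apply, map_apply, mul_transpose_apply_of_row_eq Q hK]
  ext i j
  rw [hE, diagonal_inv_mulVec_one_mul_apply, hW]
  simp only [map_apply]

/-- the row-wise softmax of `Q K̂ᵀ` (with `K̂ⱼ = C_{z(j)}`) factors as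
`Diag(exp(Q Cᵀ) Δ 1)⁻¹ · exp(Q Cᵀ) · Δ`. -/
theorem vq_softmax_factorization {T S D : ℕ} [NeZero T]
    (Q : Matrix (Fin T) (Fin D) ℝ) (C : Matrix (Fin S) (Fin D) ℝ)
    (z : Fin T → Fin S)
    (Khat : Matrix (Fin T) (Fin D) ℝ) (hK : ∀ j : Fin T, Khat j = C (z j))
    (Δ : Matrix (Fin S) (Fin T) ℝ)
    (hΔ : ∀ (s : Fin S) (t : Fin T), Δ s t = if s = z t then 1 else 0)
    (W : Matrix (Fin T) (Fin T) ℝ)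
    (hW : ∀ i j : Fin T, W i j =
      Real.exp ((Q * Khatᵀ) i j) / ∑ j' : Fin T, Real.exp ((Q * Khatᵀ) i j')) :
    W = Matrix.diagonal
          (fun i => ((((Q * Cᵀ).map Real.exp) * Δ).mulVec (fun _ => (1 : ℝ)) i)⁻¹)
        * (((Q * Cᵀ).map Real.exp) * Δ) :=
  vq_softmax_factorization_general Q C z Khat hK Δ hΔ W hW
end

section
/- Let T = N·L, let Q, K̂ ∈ ℝ^{T×D}, V ∈ ℝ^{T×D_v}, with K̂ⱼ = C_{z(j)} for a codebook C ∈ ℝ^{S×D}. Let B ∈ ℝ̄^{T×T} satisfy B_{i,j} = −∞ for j > i and B_{i,j} = 0 for j < i − L. Let φ : ℝ̄ → ℝ be applied entrywise with φ(−∞) = 0, and W = φ(Q K̂ᵀ + B). Define U(n) by U(n) = 0 for n < 0 and U(n) = U(n−1) + Δ_{(:,n)} V_{(n,:)} for n ≥ 0. Then for each block index n, (W V)_{(n,:)} = φ(Q_{(n,:)} Cᵀ) U(n−2) + φ(Q_{(n,:)} K̂_{(n−1,:)}ᵀ + B_{(n,n−1)}) V_{(n−1,:)} + φ(Q_{(n,:)}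 K̂_{(n,:)}ᵀ + B_{(n,n)}) V_{(n,:)}, where out-of-range blocks (index < 0) are zero matrices. -/
/-!
Unrolling the recurrence, `U (m - 1)` sums, by codebook index, the values of all positions
before block `m`. In row `i` of block `n`, each key position `t` falls into exactly one of
four ranges: more than `L` before block `n`, where the bias vanishes and the weight only
depends on the code `z t`, so these terms regroup into the cache term with `U (n - 2)`;
the previous block; the current block; and the future, where the mask gives `φ ⊥ = 0`.
-/

open Finset

theorem sum_mul_sum_ite_and_eq {ι σ R : Type*} [Fintype ι] [Fintype σ] [DecidableEq σ]
    [NonUnitalNonAssocSemiring R] (p : ι → Prop) [DecidablePred p] (z : ι → σ)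
    (g : σ → R) (v : ι → R) :
    ∑ s, g s * ∑ t, (if p t ∧ z t = s then v t else 0)
      = ∑ t, if p t then g (z t) * v t else 0 := by
  simp only [mul_sum, mul_ite, mul_zero]
  rw [sum_comm]
  refine sum_congr rfl fun t _ => ?_
  by_cases hp : p t <;> simp [hp]

theorem blockCache_eq_sum_prefix {S T L Dv : ℕ} (z : Fin T → Fin S) (V : Fin T → Fin Dv → ℝ)
    (U : ℤ → Fin S → Fin Dv → ℝ) (hUneg : ∀ n : ℤ, n < 0 → U n = 0)
    (hUrec : ∀ n : ℕ, U n = fun s d => U ((n : ℤ) - 1) s d +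
      ∑ t : Fin T, if n * L ≤ t.val ∧ t.val < (n + 1) * L ∧ z t = s then V t d else 0)
    (m : ℕ) (s : Fin S) (d : Fin Dv) :
    U ((m : ℤ) - 1) s d = ∑ t : Fin T, if t.val < m * L ∧ z t = s then V t d else 0 := by
  induction m with
  | zero => simp [hUneg]
  | succ m ih =>
    rw [Nat.cast_succ, add_sub_cancel_right, hUrec m]
    dsimp only
    rw [ih, ← sum_add_distrib]
    refine sum_congr rfl fun t _ => ?_
    have hblock : (m + 1) * L = m * L + L := add_one_mul m L
    split_ifs <;> first | omega | simp

theorem vq_attention_block_recurrence_general {S T N L D Dv : ℕ}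
    (Q : Fin T → Fin D → ℝ) (C : Fin S → Fin D → ℝ) (z : Fin T → Fin S)
    (Khat : Fin T → Fin D → ℝ) (hK : ∀ j : Fin T, Khat j = C (z j))
    (V : Fin T → Fin Dv → ℝ)
    (B : Fin T → Fin T → EReal)
    (hBcausal : ∀ i j : Fin T, i.val < j.val → B i j = ⊥)
    (hBzero : ∀ i j : Fin T, j.val + L < i.val → B i j = 0)
    (φ : EReal → ℝ) (hφbot : φ ⊥ = 0)
    (W : Fin T → Fin T → ℝ)
    (hW : ∀ i t : Fin T,
      W i t = φ (((∑ d, Q i d * Khat t d : ℝ) : EReal) + B i t))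
    (U : ℤ → Fin S → Fin Dv → ℝ)
    (hUneg : ∀ n : ℤ, n < 0 → U n = 0)
    (hUrec : ∀ n : ℕ, U n = fun s d => U ((n : ℤ) - 1) s d +
      ∑ t : Fin T, if n * L ≤ t.val ∧ t.val < (n + 1) * L ∧ z t = s then V t d else 0) :
    ∀ n : ℕ, n < N → ∀ i : Fin T, n * L ≤ i.val → i.val < (n + 1) * L → ∀ d : Fin Dv,
      ∑ t : Fin T, W i t * V t d
        = (∑ s : Fin S, φ ((∑ dd, Q i dd * C s dd : ℝ) : EReal) * U ((n : ℤ) - 2) s d)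
          + (∑ t : Fin T,
              if n * L ≤ t.val + L ∧ t.val + L < (n + 1) * L then W i t * V t d else 0)
          + (∑ t : Fin T,
              if n * L ≤ t.val ∧ t.val < (n + 1) * L then W i t * V t d else 0) := by
  intro n _ i hi₁ hi₂ d
  have hblock : (n + 1) * L = n * L + L := add_one_mul n L
  have hcache : ∀ s, U ((n : ℤ) - 2) s d
      = ∑ t : Fin T, if t.val + L < n * L ∧ z t = s then V t d else 0 := by
    intro s
    rcases n with _ | n
    · simp [hUneg]
    · rw [show ((n + 1 : ℕ) : ℤ) - 2 = (n : ℤ) - 1 by push_cast; ring,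
        blockCache_eq_sum_prefix z V U hUneg hUrec]
      simp only [add_one_mul, add_lt_add_iff_right]
  have hfar : ∀ t : Fin T, t.val + L < n * L →
      W i t = φ ((∑ dd, Q i dd * C (z t) dd : ℝ) : EReal) := fun t ht => by
    rw [hW, hBzero i t (by omega), add_zero, hK]
  have hmasked : ∀ t : Fin T, i.val < t.val → W i t = 0 := fun t ht => by
    rw [hW, hBcausal i t ht, EReal.add_bot, hφbot]
  simp only [hcache]
  rw [sum_mul_sum_ite_and_eq, ← sum_add_distrib, ← sum_add_distrib]
  refine sum_congr rfl fun t _ => ?_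
  by_cases hpast : t.val + L < n * L
  · rw [if_pos hpast, if_neg (by omega), if_neg (by omega), hfar t hpast]
    simp
  rw [if_neg hpast]
  by_cases hfuture : i.val < t.val
  · simp [hmasked t hfuture]
  · split_ifs <;> first | omega | simp

/-- block recurrence for masked VQ-attention with an elementwise
nonlinearity `φ` satisfying `φ(−∞) = 0`. The biases `B` (valued in extended reals) are
`−∞` above the diagonal (causal mask) and `0` strictly more than `L` positions in the
past. For any row `i` in query block `n`, the product `(W V)` row decomposes into the
codebook-score term applied to the grouped-sum cache `U(n−2)` plus the two local block
terms. -/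
theorem vq_attention_block_recurrence {S T N L D Dv : ℕ} (hL : 0 < L) (hT : T = N * L)
    (Q : Fin T → Fin D → ℝ) (C : Fin S → Fin D → ℝ) (z : Fin T → Fin S)
    (Khat : Fin T → Fin D → ℝ) (hK : ∀ j : Fin T, Khat j = C (z j))
    (V : Fin T → Fin Dv → ℝ)
    (B : Fin T → Fin T → EReal)
    (hBcausal : ∀ i j : Fin T, i.val < j.val → B i j = ⊥)
    (hBzero : ∀ i j : Fin T, j.val + L < i.val → B i j = 0)
    (φ : EReal → ℝ) (hφbot : φ ⊥ = 0)
    (W : Fin T → Fin T → ℝ)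
    (hW : ∀ i t : Fin T,
      W i t = φ (((∑ d, Q i d * Khat t d : ℝ) : EReal) + B i t))
    (U : ℤ → Fin S → Fin Dv → ℝ)
    (hUneg : ∀ n : ℤ, n < 0 → U n = 0)
    (hUrec : ∀ n : ℕ, U n = fun s d => U ((n : ℤ) - 1) s d +
      ∑ t : Fin T, if n * L ≤ t.val ∧ t.val < (n + 1) * L ∧ z t = s then V t d else 0) :
    ∀ n : ℕ, n < N → ∀ i : Fin T, n * L ≤ i.val → i.val < (n + 1) * L → ∀ d : Fin Dv,
      ∑ t : Fin T, W i t * V t d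
        = (∑ s : Fin S, φ ((∑ dd, Q i dd * C s dd : ℝ) : EReal) * U ((n : ℤ) - 2) s d)
          + (∑ t : Fin T,
              if n * L ≤ t.val + L ∧ t.val + L < (n + 1) * L then W i t * V t d else 0)
          + (∑ t : Fin T,
              if n * L ≤ t.val ∧ t.val < (n + 1) * L then W i t * V t d else 0) :=
  vq_attention_block_recurrence_general Q C z Khat hK V B hBcausal hBzero φ hφbot W hW U hUneg hUrec
end
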